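/- Let f∈ST_σ(α,φ) with α≥0 (as above: f bi-univalent, zf'/f+αz²f''/f ≺ φ and the same for g=f⁻¹, φ(z)=1+B₁z+B₂z²+⋯, B₁>0). Then |a₃| ≤ (B₁+|B₂−B₁|)/(1+4α). -/

import Mathlib

/-!
Write `aₖ, cₖ, dₖ` for the Taylor coefficients of `f, u, v`. Comparing coefficients of
`z f' + α z² f'' = φ(u) f` up to order three gives `(1 + 2α) a₂ = B₁ c₁` and
`(2 + 6α) a₃ = B₁ c₁ a₂ + B₁ c₂ + B₂ c₁²`; the same holds for `g = f⁻¹`, whose coefficients are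
`-a₂` and `2a₂² - a₃`, with `v` in place of `u`. The second-order relations force `d₁ = -c₁`.
Adding `3 + 10α` times the third-order relation for `f` to `1 + 2α` times the one for `g`, the
`a₂²` terms cancel against the second-order relation and
`(1 + 4α) a₃ = B₁ (p c₂ + q d₂) + B₂ c₁²` with `p, q ≥ 0`, `p + q = 1`. The Schwarz–Pick bound
`|c₂| ≤ 1 - |c₁|²` (and likewise for `v`) then gives
`(1 + 4α) |a₃| ≤ B₁ (1 - |c₁|²) + |B₂| |c₁|² ≤ B₁ + |B₂ - B₁|`.
-/

open Metric Complex Filter Topology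

/-- n-th Taylor coefficient of `f` at `0`. -/
noncomputable def tc (f : ℂ → ℂ) (n : ℕ) : ℂ := iteratedDeriv n f 0 / n.factorial

open ComplexConjugate

section
variable {𝕜 : Type*} [NontriviallyNormedField 𝕜]

theorem iteratedDeriv_pow_mul_zero {h : 𝕜 → 𝕜} (m n : ℕ) (hh : ContDiffAt 𝕜 (n + m : ℕ) h 0) :
    iteratedDeriv (n + m) (fun z => z ^ m * h z) 0
      = (n + m).descFactorial m * iteratedDeriv n h 0 := by
  have hpow : ContDiffAt 𝕜 (n + m : ℕ) (fun z : 𝕜 => z ^ m) 0 := contDiffAt_id.pow m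
  rw [iteratedDeriv_fun_mul hpow hh, Finset.sum_eq_single m]
  · rw [iteratedDeriv_fun_pow_zero, if_pos rfl, Nat.descFactorial_eq_factorial_mul_choose,
      Nat.add_sub_cancel]
    push_cast
    ring
  · intro i _ hi
    rw [iteratedDeriv_fun_pow_zero, if_neg hi]
    simp
  · simp

theorem iteratedDeriv_mul_id_zero {h : 𝕜 → 𝕜} (n : ℕ) (hh : ContDiffAt 𝕜 (n + 1 : ℕ) h 0) :
    iteratedDeriv (n + 1) (fun z => z * h z) 0 = (n + 1) * iteratedDeriv n h 0 := by
  simpa using iteratedDeriv_pow_mul_zero 1 n hh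

theorem iteratedDeriv_iteratedDeriv (m n : ℕ) (f : 𝕜 → 𝕜) :
    iteratedDeriv m (iteratedDeriv n f) = iteratedDeriv (m + n) f := by
  simp only [iteratedDeriv_eq_iterate, Function.iterate_add_apply]

variable [CompleteSpace 𝕜] {φ U : 𝕜 → 𝕜} {x : 𝕜}

theorem deriv_comp_eventuallyEq (hφ : AnalyticAt 𝕜 φ (U x)) (hU : AnalyticAt 𝕜 U x) :
    deriv (fun z => φ (U z)) =ᶠ[𝓝 x] fun z => deriv φ (U z) * deriv U z := by
  filter_upwards [hU.continuousAt.eventually hφ.eventually_analyticAt, hU.eventually_analyticAt]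
    with z hφz hUz
  exact deriv_comp z hφz.differentiableAt hUz.differentiableAt

theorem iteratedDeriv_two_comp (hφ : AnalyticAt 𝕜 φ (U x)) (hU : AnalyticAt 𝕜 U x) :
    iteratedDeriv 2 (fun z => φ (U z)) x
      = iteratedDeriv 2 φ (U x) * deriv U x ^ 2 + deriv φ (U x) * iteratedDeriv 2 U x := by
  have hφ' : HasDerivAt (fun z => deriv φ (U z)) (deriv (deriv φ) (U x) * deriv U x) x :=
    hφ.deriv.differentiableAt.hasDerivAt.comp x hU.differentiableAt.hasDerivAt
  simp only [iteratedDeriv_succ', iteratedDeriv_zero]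
  rw [(deriv_comp_eventuallyEq hφ hU).deriv_eq,
    (hφ'.fun_mul hU.deriv.differentiableAt.hasDerivAt).deriv]
  ring

theorem iteratedDeriv_three_comp (hφ : AnalyticAt 𝕜 φ (U x)) (hU : AnalyticAt 𝕜 U x) :
    iteratedDeriv 3 (fun z => φ (U z)) x
      = iteratedDeriv 3 φ (U x) * deriv U x ^ 3
        + 3 * iteratedDeriv 2 φ (U x) * deriv U x * iteratedDeriv 2 U x
        + deriv φ (U x) * iteratedDeriv 3 U x := by
  have hφU : AnalyticAt 𝕜 (fun z => deriv φ (U z)) x := hφ.deriv.comp hU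
  rw [iteratedDeriv_succ', (deriv_comp_eventuallyEq hφ hU).iteratedDeriv_eq,
    iteratedDeriv_fun_mul hφU.contDiffAt hU.deriv.contDiffAt]
  simp only [Finset.sum_range_succ, Finset.sum_range_zero]
  rw [iteratedDeriv_two_comp hφ.deriv hU, iteratedDeriv_one,
    (deriv_comp_eventuallyEq hφ.deriv hU).self_of_nhds]
  simp only [Nat.choose_zero_right, Nat.cast_one, iteratedDeriv_zero, one_mul, tsub_zero,
    iteratedDeriv_succ', zero_add, Nat.choose_succ_self_right, Nat.reduceAdd, Nat.cast_ofNat,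
    Nat.add_one_sub_one, Nat.choose_self, tsub_self]
  ring

end

theorem tc_one (f : ℂ → ℂ) : tc f 1 = deriv f 0 := by
  simp [tc]

section
variable {φ U : ℂ → ℂ}

theorem tc_comp_one (hφ : AnalyticAt ℂ φ 0) (hU : AnalyticAt ℂ U 0) (hU0 : U 0 = 0) :
    tc (fun z => φ (U z)) 1 = tc φ 1 * tc U 1 := by
  rw [← hU0] at hφ
  simp only [tc_one, (deriv_comp_eventuallyEq hφ hU).self_of_nhds, hU0]

theorem tc_comp_two (hφ : AnalyticAt ℂ φ 0) (hU : AnalyticAt ℂ U 0) (hU0 : U 0 = 0) :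
    tc (fun z => φ (U z)) 2 = tc φ 1 * tc U 2 + tc φ 2 * tc U 1 ^ 2 := by
  rw [← hU0] at hφ
  simp only [tc, iteratedDeriv_two_comp hφ hU, hU0, iteratedDeriv_one, Nat.factorial]
  push_cast
  ring

theorem tc_comp_three (hφ : AnalyticAt ℂ φ 0) (hU : AnalyticAt ℂ U 0) (hU0 : U 0 = 0) :
    tc (fun z => φ (U z)) 3
      = tc φ 1 * tc U 3 + 2 * tc φ 2 * tc U 1 * tc U 2 + tc φ 3 * tc U 1 ^ 3 := by
  rw [← hU0] at hφ
  simp only [tc, iteratedDeriv_three_comp hφ hU, hU0, iteratedDeriv_one, Nat.factorial]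
  push_cast
  ring

end

theorem tc_of_eventually_comp_eq_id {f g : ℂ → ℂ} (hf : AnalyticAt ℂ f 0) (hg : AnalyticAt ℂ g 0)
    (hf0 : f 0 = 0) (hf1 : deriv f 0 = 1) (hinv : ∀ᶠ z in 𝓝 0, g (f z) = z) :
    tc g 1 = 1 ∧ tc g 2 = -tc f 2 ∧ tc g 3 = 2 * tc f 2 ^ 2 - tc f 3 := by
  have htc_f1 : tc f 1 = 1 := by rw [tc_one, hf1]
  have hid : ∀ n, tc (fun z => g (f z)) n = if n = 1 then 1 else 0 := fun n => by
    rw [tc, Filter.EventuallyEq.iteratedDeriv_eq n hinv, iteratedDeriv_fun_id_zero]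
    split_ifs with hn <;> simp [hn]
  have h1 := (tc_comp_one hg hf hf0).symm.trans (hid 1)
  have h2 := (tc_comp_two hg hf hf0).symm.trans (hid 2)
  have h3 := (tc_comp_three hg hf hf0).symm.trans (hid 3)
  simp only [htc_f1, mul_one, ↓reduceIte, one_pow, OfNat.ofNat_ne_one] at h1 h2 h3
  refine ⟨h1, ?_, ?_⟩
  · linear_combination h2 - tc f 2 * h1
  · linear_combination h3 - 2 * tc f 2 * h2 + (2 * tc f 2 ^ 2 - tc f 3) * h1

theorem tc_of_eventually_ode {F P : ℂ → ℂ} {α : ℂ} (hF : AnalyticAt ℂ F 0) (hP : AnalyticAt ℂ P 0)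
    (hF0 : F 0 = 0) (hF1 : deriv F 0 = 1) (hP0 : P 0 = 1)
    (hode : ∀ᶠ z in 𝓝 0, z * deriv F z + α * z ^ 2 * iteratedDeriv 2 F z = P z * F z) :
    (1 + 2 * α) * tc F 2 = tc P 1 ∧ (2 + 6 * α) * tc F 3 = tc P 1 * tc F 2 + tc P 2 := by
  have hF' : ∀ {n : WithTop ℕ∞}, ContDiffAt ℂ n (deriv F) 0 := hF.deriv.contDiffAt
  have hF'' : ∀ {n : WithTop ℕ∞}, ContDiffAt ℂ n (iteratedDeriv 2 F) 0 := by
    rw [iteratedDeriv_eq_iterate]; exact (hF.iterated_deriv 2).contDiffAt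
  have lhs : ∀ n : ℕ, iteratedDeriv (n + 2)
      (fun z => z * deriv F z + α * (z ^ 2 * iteratedDeriv 2 F z)) 0
      = (n + 2) * iteratedDeriv (n + 2) F 0
        + α * ((n + 2).descFactorial 2 * iteratedDeriv (n + 2) F 0) := by
    intro n
    have h1 := iteratedDeriv_mul_id_zero (n + 1) hF'
    have h2 := iteratedDeriv_pow_mul_zero 2 n hF''
    rw [← iteratedDeriv_succ'] at h1
    rw [iteratedDeriv_iteratedDeriv] at h2
    rw [iteratedDeriv_fun_add, iteratedDeriv_const_mul_field, h1, h2]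
    · push_cast
      ring
    · exact contDiffAt_id.mul hF'
    · exact contDiffAt_const.mul ((contDiffAt_id.pow 2).mul hF'')
  have rhs : ∀ n : ℕ, iteratedDeriv n (fun z => P z * F z) 0
      = ∑ i ∈ Finset.range (n + 1), n.choose i * iteratedDeriv i P 0 * iteratedDeriv (n - i) F 0 :=
    fun n => iteratedDeriv_fun_mul hP.contDiffAt hF.contDiffAt
  have hode' : ∀ n, iteratedDeriv n (fun z => z * deriv F z + α * (z ^ 2 * iteratedDeriv 2 F z)) 0
      = iteratedDeriv n (fun z => P z * F z) 0 := fun n =>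
    Filter.EventuallyEq.iteratedDeriv_eq n (hode.mono fun z hz => by simp only [← hz]; ring)
  have e2 := (lhs 0).symm.trans ((hode' 2).trans (rhs 2))
  have e3 := (lhs 1).symm.trans ((hode' 3).trans (rhs 3))
  simp only [CharP.cast_eq_zero, zero_add, Nat.descFactorial_succ, Nat.add_one_sub_one, tsub_zero,
    Nat.descFactorial_zero, mul_one, one_mul, Nat.cast_ofNat, Nat.reduceAdd, Finset.sum_range_succ,
    Finset.range_one, Finset.sum_singleton, Nat.choose_zero_right, Nat.cast_one, iteratedDeriv_zero,
    hP0, Nat.choose_succ_self_right, iteratedDeriv_one, hF1, Nat.choose_self, tsub_self, hF0,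
    mul_zero, add_zero, Nat.reduceMul, Nat.choose_one_right, Nat.reduceSub] at e2 e3
  simp only [tc, Nat.factorial, iteratedDeriv_one]
  push_cast
  exact ⟨by linear_combination e2 / 2, by linear_combination e3 / 6⟩

theorem normSq_one_sub_conj_mul_sub_normSq_sub (a ζ : ℂ) :
    normSq (1 - conj a * ζ) - normSq (ζ - a) = (1 - normSq a) * (1 - normSq ζ) := by
  simp only [normSq_apply, sub_re, sub_im, mul_re, mul_im, one_re, one_im, conj_re, conj_im]
  ring

theorem norm_sub_lt_norm_one_sub_conj_mul {a ζ : ℂ} (ha : ‖a‖ < 1) (hζ : ‖ζ‖ < 1) :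
    ‖ζ - a‖ < ‖1 - conj a * ζ‖ := by
  have hpos : 0 < (1 - normSq a) * (1 - normSq ζ) := by
    rw [normSq_eq_norm_sq, normSq_eq_norm_sq]
    apply mul_pos <;> nlinarith [norm_nonneg a, norm_nonneg ζ]
  rw [← normSq_one_sub_conj_mul_sub_normSq_sub, normSq_eq_norm_sq, normSq_eq_norm_sq] at hpos
  exact lt_of_pow_lt_pow_left₀ 2 (norm_nonneg _) (by linarith)

theorem norm_deriv_zero_le_one_sub_norm_sq {w : ℂ → ℂ} (hd : DifferentiableOn ℂ w (ball 0 1))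
    (hmaps : Set.MapsTo w (ball 0 1) (ball 0 1)) : ‖deriv w 0‖ ≤ 1 - ‖w 0‖ ^ 2 := by
  set a := w 0
  have ha : ‖a‖ < 1 := mem_ball_zero_iff.1 (hmaps (mem_ball_self one_pos))
  have hden : ∀ z ∈ ball (0 : ℂ) 1, 1 - conj a * w z ≠ 0 := fun z hz => by
    have := norm_sub_lt_norm_one_sub_conj_mul ha (mem_ball_zero_iff.1 (hmaps hz))
    exact norm_pos_iff.1 ((norm_nonneg _).trans_lt this)
  set h : ℂ → ℂ := fun z => (w z - a) / (1 - conj a * w z)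
  have hhd : DifferentiableOn ℂ h (ball 0 1) := fun z hz =>
    ((hd z hz).sub_const a).div (((hd z hz).const_mul _).const_sub 1) (hden z hz)
  have hhmaps : Set.MapsTo h (ball 0 1) (closedBall (h 0) 1) := fun z hz => by
    have hz' := mem_ball_zero_iff.1 (hmaps hz)
    simp only [h, a, sub_self, zero_div, mem_closedBall_zero_iff, norm_div]
    exact (div_lt_one ((norm_nonneg _).trans_lt (norm_sub_lt_norm_one_sub_conj_mul ha hz'))).2
      (norm_sub_lt_norm_one_sub_conj_mul ha hz') |>.le
  have hnormSq : (1 : ℂ) - conj a * a = ((1 - ‖a‖ ^ 2 : ℝ) : ℂ) := by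
    rw [conj_mul']; push_cast; ring
  have hpos : 0 < 1 - ‖a‖ ^ 2 := by nlinarith [norm_nonneg a]
  have hderiv : deriv h 0 = deriv w 0 / (1 - conj a * a) := by
    have hw0 : HasDerivAt w (deriv w 0) 0 :=
      (hd.differentiableAt (ball_mem_nhds 0 one_pos)).hasDerivAt
    have hden0 := hden 0 (mem_ball_self one_pos)
    rw [((hw0.sub_const a).fun_div ((hw0.const_mul (conj a)).const_sub 1) hden0).deriv]
    simp only [show w 0 = a from rfl, sub_self, zero_mul, sub_zero] at hden0 ⊢
    field_simp
  have := Complex.norm_deriv_le_one_of_mapsTo_ball hhd hhmaps one_pos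
  rwa [hderiv, hnormSq, norm_div, norm_real, Real.norm_of_nonneg hpos.le, div_le_one hpos] at this

theorem norm_deriv_zero_le_one_sub_norm_sq_of_mapsTo_closedBall {w : ℂ → ℂ}
    (hd : DifferentiableOn ℂ w (ball 0 1)) (hmaps : Set.MapsTo w (ball 0 1) (closedBall 0 1)) :
    ‖deriv w 0‖ ≤ 1 - ‖w 0‖ ^ 2 := by
  have hscaled : ∀ s ∈ Set.Ioo (0 : ℝ) 1, s * ‖deriv w 0‖ + s ^ 2 * ‖w 0‖ ^ 2 ≤ 1 := by
    rintro s ⟨hs0, hs1⟩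
    have hsw : Set.MapsTo (fun z => (s : ℂ) * w z) (ball 0 1) (ball 0 1) := fun z hz => by
      have := mem_closedBall_zero_iff.1 (hmaps hz)
      rw [mem_ball_zero_iff, norm_mul, norm_real, Real.norm_of_nonneg hs0.le]
      nlinarith
    have := norm_deriv_zero_le_one_sub_norm_sq (hd.const_mul (s : ℂ)) hsw
    rw [deriv_const_mul_field', norm_mul, norm_mul, norm_real, Real.norm_of_nonneg hs0.le] at this
    linarith
  have hlim : Tendsto (fun s : ℝ => s * ‖deriv w 0‖ + s ^ 2 * ‖w 0‖ ^ 2) (𝓝[<] 1)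
      (𝓝 (1 * ‖deriv w 0‖ + 1 ^ 2 * ‖w 0‖ ^ 2)) :=
    ((continuous_id.mul continuous_const).add
      ((continuous_pow 2).mul continuous_const)).continuousAt.tendsto.mono_left nhdsWithin_le_nhds
  have := le_of_tendsto hlim (by filter_upwards [Ioo_mem_nhdsLT zero_lt_one] using hscaled)
  linarith

theorem norm_tc_two_le_one_sub_norm_tc_one_sq {u : ℂ → ℂ} (hd : DifferentiableOn ℂ u (ball 0 1))
    (hmaps : Set.MapsTo u (ball 0 1) (ball 0 1)) (hu0 : u 0 = 0) :
    ‖tc u 2‖ ≤ 1 - ‖tc u 1‖ ^ 2 := by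
  set w := dslope u 0
  have hwd : DifferentiableOn ℂ w (ball 0 1) :=
    (Complex.differentiableOn_dslope (ball_mem_nhds 0 one_pos)).2 hd
  have hmaps' : Set.MapsTo u (ball 0 1) (closedBall (u 0) 1) := by
    rw [hu0]; exact hmaps.mono_right ball_subset_closedBall
  have hwmaps : Set.MapsTo w (ball 0 1) (closedBall 0 1) := fun z hz => by
    simpa using Complex.norm_dslope_le_div_of_mapsTo_ball hd hmaps' hz
  have hu : u = fun z => z * w z := funext fun z => by
    simpa [hu0] using (sub_smul_dslope u 0 z).symm
  have htc1 : tc u 1 = w 0 := by simp [tc, w, dslope_same]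
  have htc2 : tc u 2 = deriv w 0 := by
    have := iteratedDeriv_mul_id_zero 1 (hwd.analyticAt (ball_mem_nhds 0 one_pos)).contDiffAt
    rw [← hu, iteratedDeriv_one] at this
    rw [tc, this]
    norm_num [Nat.factorial]
  rw [htc1, htc2]
  exact norm_deriv_zero_le_one_sub_norm_sq_of_mapsTo_closedBall hwd hwmaps

theorem tc_of_eventually_ode_comp {F U φ : ℂ → ℂ} {α : ℂ} (hF : AnalyticAt ℂ F 0)
    (hU : AnalyticAt ℂ U 0) (hφ : AnalyticAt ℂ φ 0) (hF0 : F 0 = 0) (hF1 : deriv F 0 = 1)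
    (hU0 : U 0 = 0) (hφ0 : φ 0 = 1)
    (hode : ∀ᶠ z in 𝓝 0, z * deriv F z + α * z ^ 2 * iteratedDeriv 2 F z = φ (U z) * F z) :
    (1 + 2 * α) * tc F 2 = tc φ 1 * tc U 1 ∧
      (2 + 6 * α) * tc F 3 = tc φ 1 * tc U 1 * tc F 2 + (tc φ 1 * tc U 2 + tc φ 2 * tc U 1 ^ 2) := by
  have hφU : AnalyticAt ℂ (fun z => φ (U z)) 0 := by
    rw [← hU0] at hφ
    exact hφ.comp hU
  rw [← tc_comp_one hφ hU hU0, ← tc_comp_two hφ hU hU0]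
  exact tc_of_eventually_ode hF hφU hF0 hF1 (by simp only [hU0, hφ0]) hode

theorem eventually_ode_of_injOn {F P : ℂ → ℂ} {α : ℂ} (hinj : Set.InjOn F (ball 0 1))
    (hF0 : F 0 = 0)
    (h : ∀ z ∈ ball (0 : ℂ) 1, z ≠ 0 →
      z * deriv F z / F z + α * z ^ 2 * iteratedDeriv 2 F z / F z = P z) :
    ∀ᶠ z in 𝓝 0, z * deriv F z + α * z ^ 2 * iteratedDeriv 2 F z = P z * F z := by
  filter_upwards [ball_mem_nhds (0 : ℂ) one_pos] with z hz
  rcases eq_or_ne z 0 with rfl | hz0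
  · simp [hF0]
  · have hFz : F z ≠ 0 := fun hFz =>
      hz0 (hinj hz (mem_ball_self one_pos) (hFz.trans hF0.symm))
    rw [← h z hz hz0, ← add_div, div_mul_cancel₀ _ hFz]

theorem norm_mul_convexComb_add_mul_sq_le {B₁ B₂ p q : ℝ} {c₁ c₂ d₂ : ℂ} (hB₁ : 0 ≤ B₁)
    (hp : 0 ≤ p) (hq : 0 ≤ q) (hpq : p + q = 1)
    (hc₂ : ‖c₂‖ ≤ 1 - ‖c₁‖ ^ 2) (hd₂ : ‖d₂‖ ≤ 1 - ‖c₁‖ ^ 2) :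
    ‖(B₁ : ℂ) * (p * c₂ + q * d₂) + B₂ * c₁ ^ 2‖ ≤ B₁ + |B₂ - B₁| := by
  have ht : ‖c₁‖ ^ 2 ≤ 1 := by linarith [norm_nonneg c₂]
  have hB₂ : |B₂| ≤ B₁ + |B₂ - B₁| := by
    simpa [abs_of_nonneg hB₁] using abs_add_le B₁ (B₂ - B₁)
  calc ‖(B₁ : ℂ) * (p * c₂ + q * d₂) + B₂ * c₁ ^ 2‖
      ≤ ‖(B₁ : ℂ)‖ * (‖(p : ℂ)‖ * ‖c₂‖ + ‖(q : ℂ)‖ * ‖d₂‖) + ‖(B₂ : ℂ)‖ * ‖c₁‖ ^ 2 := by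
        grw [norm_add_le, norm_mul, norm_add_le, norm_mul, norm_mul, norm_mul, norm_pow]
    _ = B₁ * (p * ‖c₂‖ + q * ‖d₂‖) + |B₂| * ‖c₁‖ ^ 2 := by
        simp only [norm_real, Real.norm_eq_abs, abs_of_nonneg hB₁, abs_of_nonneg hp,
          abs_of_nonneg hq]
    _ ≤ B₁ * ((p + q) * (1 - ‖c₁‖ ^ 2)) + (B₁ + |B₂ - B₁|) * ‖c₁‖ ^ 2 := by
        rw [add_mul]
        gcongr
    _ ≤ B₁ + |B₂ - B₁| := by rw [hpq]; nlinarith [abs_nonneg (B₂ - B₁)]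

theorem one_add_four_mul_eq_convexComb {α B₁ B₂ : ℝ} (hα : 0 ≤ α) {a₂ a₃ c₁ c₂ d₂ : ℂ}
    (hf₂ : (1 + 2 * α) * a₂ = B₁ * c₁)
    (hf₃ : (2 + 6 * α) * a₃ = B₁ * c₁ * a₂ + (B₁ * c₂ + B₂ * c₁ ^ 2))
    (hg₃ : (2 + 6 * α) * (2 * a₂ ^ 2 - a₃) = B₁ * -c₁ * -a₂ + (B₁ * d₂ + B₂ * (-c₁) ^ 2)) :
    (1 + 4 * α) * a₃ = B₁ * (((3 + 10 * α) / (4 + 12 * α) : ℝ) * c₂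
      + ((1 + 2 * α) / (4 + 12 * α) : ℝ) * d₂) + B₂ * c₁ ^ 2 := by
  have h : (4 + (α : ℂ) * 12) ≠ 0 := by exact_mod_cast (by positivity : 4 + α * 12 ≠ 0)
  push_cast
  field_simp
  linear_combination (3 + 10 * (α : ℂ)) * hf₃ + (1 + 2 * (α : ℂ)) * hg₃ - 2 * (2 + 6 * (α : ℂ)) * a₂ * hf₂

theorem norm_le_of_bi_subordination_relations {α B₁ B₂ : ℝ} (hα : 0 ≤ α) (hB₁ : 0 < B₁)
    {a₂ a₃ c₁ c₂ d₁ d₂ : ℂ}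
    (hf₂ : (1 + 2 * α) * a₂ = B₁ * c₁)
    (hf₃ : (2 + 6 * α) * a₃ = B₁ * c₁ * a₂ + (B₁ * c₂ + B₂ * c₁ ^ 2))
    (hg₂ : (1 + 2 * α) * -a₂ = B₁ * d₁)
    (hg₃ : (2 + 6 * α) * (2 * a₂ ^ 2 - a₃) = B₁ * d₁ * -a₂ + (B₁ * d₂ + B₂ * d₁ ^ 2))
    (hc : ‖c₂‖ ≤ 1 - ‖c₁‖ ^ 2) (hd : ‖d₂‖ ≤ 1 - ‖d₁‖ ^ 2) :
    ‖a₃‖ ≤ (B₁ + |B₂ - B₁|) / (1 + 4 * α) := by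
  have hd₁ : d₁ = -c₁ := by
    have : (B₁ : ℂ) * (c₁ + d₁) = 0 := by linear_combination -hf₂ - hg₂
    simpa [hB₁.ne', add_eq_zero_iff_eq_neg'] using this
  subst hd₁
  rw [norm_neg] at hd
  have hbound := norm_mul_convexComb_add_mul_sq_le (B₂ := B₂) (p := (3 + 10 * α) / (4 + 12 * α))
    (q := (1 + 2 * α) / (4 + 12 * α)) hB₁.le (div_nonneg (by linarith) (by linarith))
    (div_nonneg (by linarith) (by linarith))
    (by rw [← add_div, div_eq_one_iff_eq (by linarith)]; ring) hc hd
  have hnorm : ‖(1 + 4 * α : ℂ)‖ = 1 + 4 * α := by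
    exact_mod_cast Real.norm_of_nonneg (by linarith : 0 ≤ 1 + 4 * α)
  rw [← one_add_four_mul_eq_convexComb hα hf₂ hf₃ hg₃, norm_mul, hnorm] at hbound
  rw [le_div_iff₀ (by linarith)]
  linarith

theorem stmt12 (f g u v φ : ℂ → ℂ) (α B₁ B₂ : ℝ) (hα : 0 ≤ α)
    (hf : AnalyticOn ℂ f (ball (0:ℂ) 1)) (hfinj : Set.InjOn f (ball (0:ℂ) 1))
    (hf0 : f 0 = 0) (hf1 : deriv f 0 = 1)
    (hg : AnalyticOn ℂ g (ball (0:ℂ) 1)) (hginj : Set.InjOn g (ball (0:ℂ) 1))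
    (hinv : ∀ᶠ z in 𝓝 (0:ℂ), g (f z) = z)
    (hu : AnalyticOn ℂ u (ball (0:ℂ) 1)) (humap : ∀ z ∈ ball (0:ℂ) 1, u z ∈ ball (0:ℂ) 1) (hu0 : u 0 = 0)
    (hv : AnalyticOn ℂ v (ball (0:ℂ) 1)) (hvmap : ∀ w ∈ ball (0:ℂ) 1, v w ∈ ball (0:ℂ) 1) (hv0 : v 0 = 0)
    (hφ : AnalyticOn ℂ φ (ball (0:ℂ) 1)) (hφ0 : φ 0 = 1)
    (hB₁ : tc φ 1 = (B₁ : ℂ)) (hB₂ : tc φ 2 = (B₂ : ℂ)) (hB₁pos : 0 < B₁)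
    (hfu : ∀ z ∈ ball (0:ℂ) 1, z ≠ 0 →
      z * deriv f z / f z + (α : ℂ) * z ^ 2 * iteratedDeriv 2 f z / f z = φ (u z))
    (hgv : ∀ w ∈ ball (0:ℂ) 1, w ≠ 0 →
      w * deriv g w / g w + (α : ℂ) * w ^ 2 * iteratedDeriv 2 g w / g w = φ (v w)) :
    ‖tc f 3‖ ≤ (B₁ + |B₂ - B₁|) / (1 + 4 * α) := by
  have hball : ball (0 : ℂ) 1 ∈ 𝓝 0 := ball_mem_nhds 0 one_pos
  obtain ⟨hg1, hg2, hg3⟩ :=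
    tc_of_eventually_comp_eq_id (hf.analyticAt hball) (hg.analyticAt hball) hf0 hf1 hinv
  have hg0 : g 0 = 0 := by simpa [hf0] using hinv.self_of_nhds
  obtain ⟨hf₂, hf₃⟩ := tc_of_eventually_ode_comp (hf.analyticAt hball) (hu.analyticAt hball)
    (hφ.analyticAt hball) hf0 hf1 hu0 hφ0 (eventually_ode_of_injOn hfinj hf0 hfu)
  obtain ⟨hg₂, hg₃⟩ := tc_of_eventually_ode_comp (hg.analyticAt hball) (hv.analyticAt hball)
    (hφ.analyticAt hball) hg0 (tc_one g ▸ hg1) hv0 hφ0 (eventually_ode_of_injOn hginj hg0 hgv)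
  simp only [hB₁, hB₂, hg2, hg3] at hf₂ hf₃ hg₂ hg₃
  exact norm_le_of_bi_subordination_relations hα hB₁pos hf₂ hf₃ hg₂ hg₃
    (norm_tc_two_le_one_sub_norm_tc_one_sq hu.differentiableOn humap hu0)
    (norm_tc_two_le_one_sub_norm_tc_one_sq hv.differentiableOn hvmap hv0)
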